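/- arXiv:2509.20815 — 3 statements merged into one kernel-verified Lean document; each statement's English description precedes it below -/
import Mathlib

section
/- For every ordering i_1,…,i_n of 𝐧, the set Θ^𝐦_{i_1,…,i_n} is an ideal of the Laurent polynomial ring ℚ[z_1^{±1},…,z_n^{±1}], and the quotient ℚ[z_1^{±1},…,z_n^{±1}]/Θ^𝐦_{i_1,…,i_n} is a finite-dimensional ℚ-vector space. -/
open scoped BigOperators

/-! ### Iterated Laurent series -/

noncomputable def ILaux (K : Type) [Field K] : ℕ → Σ' (T : Type), Field T
  | 0 => ⟨K, inferInstance⟩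
  | n+1 => ⟨@LaurentSeries (ILaux K n).1 (letI := (ILaux K n).2; inferInstance),
            letI := (ILaux K n).2; inferInstance⟩

noncomputable instance ILaux.instField (K : Type) [Field K] (n : ℕ) : Field (ILaux K n).1 :=
  (ILaux K n).2

/-- `IterLaurent K n` is the `n`-fold iterated Laurent series field
`K((t_n))((t_{n-1}))⋯((t_1))`, with `t_1` the outermost (innermost in the notation) variable. -/
noncomputable def IterLaurent (K : Type) [Field K] (n : ℕ) : Type := (ILaux K n).1

noncomputable instance IterLaurent.instField (K : Type) [Field K] (n : ℕ) :
    Field (IterLaurent K n) := (ILaux K n).2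

/-- The variable `t_a` of the iterated Laurent series field. -/
noncomputable def tvar (K : Type) [Field K] : (n : ℕ) → Fin n → IterLaurent K n
  | n+1, ⟨0, _⟩ => (HahnSeries.single (1:ℤ) (1 : IterLaurent K n) : LaurentSeries (IterLaurent K n))
  | n+1, ⟨a+1, _h⟩ => (HahnSeries.C (tvar K n ⟨a, by omega⟩) : LaurentSeries (IterLaurent K n))

/-- Iterated extraction of the coefficient of `t_1⁻¹ t_2⁻¹ ⋯ t_n⁻¹`. -/
noncomputable def ires (K : Type) [Field K] : (n : ℕ) → IterLaurent K n → K
  | 0, x => x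
  | n+1, x => ires K n ((x : LaurentSeries (IterLaurent K n)).coeff (-1))

/-- Constants embed into the iterated Laurent series field. -/
noncomputable def constIL (K : Type) [Field K] : (n : ℕ) → (K →+* IterLaurent K n)
  | 0 => RingHom.id K
  | n+1 => ((HahnSeries.C : IterLaurent K n →+* LaurentSeries (IterLaurent K n)).comp (constIL K n))

/-! ### Laurent polynomials -/

/-- The ring of Laurent polynomials over `K` in variables indexed by `ι`. -/
noncomputable abbrev LaurentPoly (K : Type) [CommRing K] (ι : Type) : Type :=
  AddMonoidAlgebra K (ι →₀ ℤ)

/-- Evaluation of a Laurent polynomial at (invertible) values `v` in a field `L`,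
transporting coefficients along `φ`. -/
noncomputable def lpEval {K L ι : Type} [CommRing K] [Field L] (φ : K →+* L) (v : ι → L)
    (F : LaurentPoly K ι) : L :=
  F.coeff.sum fun d c => φ c * d.prod fun a k => v a ^ k

/-- Renaming of variables of a Laurent polynomial along a bijection. -/
noncomputable def lpRename {K : Type} [CommRing K] {ι κ : Type} (e : ι ≃ κ) :
    LaurentPoly K ι ≃ₐ[K] LaurentPoly K κ :=
  AddMonoidAlgebra.domCongr K K (Finsupp.domCongr e)

/-- The variable `z_c` as a Laurent polynomial. -/
noncomputable def lpVar {K : Type} [CommRing K] {ι : Type} (c : ι) : LaurentPoly K ι :=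
  AddMonoidAlgebra.single (Finsupp.single c 1) 1

/-! ### Framed paths, acceptable collections -/

/-- Formal framed paths `e_k ⋯ e_1 o_{i,ℓ}` for a quiver with arrow set `E` and
framing vector `m` (validity of the chain of arrows is a separate predicate). -/
inductive FPath (I E : Type) (m : I → ℕ) : Type
  | base (i : I) (ℓ : Fin (m i)) : FPath I E m
  | cons (e : E) (p : FPath I E m) : FPath I E m

/-- The head (ending vertex) of a framed path. -/
def FPath.headI {I E : Type} {m : I → ℕ} (hd : E → I) : FPath I E m → I
  | .base i _ => i
  | .cons e _ => hd e

/-- Validity of a framed path: consecutive arrows compose. -/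
def FPath.Valid {I E : Type} {m : I → ℕ} (tl hd : E → I) : FPath I E m → Prop
  | .base _ _ => True
  | .cons e p => tl e = p.headI hd ∧ p.Valid tl hd

variable {I E : Type}

section AccColl

variable (tl hd : E → I) (m n : I → ℕ) (N : ℕ) [LinearOrder (FPath I E m)]

/-- An acceptable collection `S = {p_1 < ⋯ < p_N}` of framed paths. -/
structure AccColl where
  path : Fin N → FPath I E m
  valid : ∀ a, (path a).Valid tl hd
  mono : StrictMono path
  counts : ∀ i : I, Nat.card {a : Fin N // (path a).headI hd = i} = n i
  acc : ∀ b : Fin N, (∃ i ℓ, path b = .base i ℓ) ∨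
    ∃ a : Fin N, a < b ∧ ∃ e : E, path b = .cons e (path a)

variable {tl hd m n N}

/-- Lexicographic (strict) order on acceptable collections. -/
def AccColl.Lt (S' S : AccColl tl hd m n N) : Prop :=
  ∃ b : Fin N, (∀ a, a < b → S'.path a = S.path a) ∧ S'.path b < S.path b

/-- Lexicographic (non-strict) order on acceptable collections. -/
def AccColl.Le (S' S : AccColl tl hd m n N) : Prop :=
  AccColl.Lt S' S ∨ S'.path = S.path

/-- `#{e ∈ E : tail(e) = head(p_a), head(e) = head(p_b), e p_a ≤ p_b}`. -/
noncomputable def AccColl.cntE (S : AccColl tl hd m n N) (a b : Fin N) : ℕ :=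
  Nat.card {e : E // tl e = (S.path a).headI hd ∧ hd e = (S.path b).headI hd ∧
    FPath.cons e (S.path a) ≤ S.path b}

/-- `#{ℓ : o_{i_a,ℓ} ≤ p_a}`. -/
noncomputable def AccColl.cntO (S : AccColl tl hd m n N) (a : Fin N) : ℕ :=
  Nat.card {ℓ : Fin (m ((S.path a).headI hd)) // FPath.base ((S.path a).headI hd) ℓ ≤ S.path a}

end AccColl

section Mu

variable (tl hd : E → I) (m n : I → ℕ) (N : ℕ) [LinearOrder (FPath I E m)]
variable [DecidableEq I]

/-- The linear functional `μ_S`, computed using a listing `e` of the variables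
(compatible listings give the same value on color-symmetric Laurent polynomials). -/
noncomputable def muFun (S : AccColl tl hd m n (N := N)) (e : Fin N ≃ (Σ i : I, Fin (n i)))
    (F : LaurentPoly ℚ (Σ i : I, Fin (n i))) : ℚ :=
  ires ℚ N <|
    lpEval (constIL ℚ N) (fun c => 1 + tvar ℚ N (e.symm c)) F *
    (∏ p ∈ Finset.filter (fun p : Fin N × Fin N => p.1 < p.2) Finset.univ,
      (tvar ℚ N p.2 - tvar ℚ N p.1) ^
        (((if (S.path p.1).headI hd = (S.path p.2).headI hd then 1 else 0) : ℤ)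
          - (S.cntE p.1 p.2 : ℤ))) *
    ∏ a : Fin N, tvar ℚ N a ^ (-(S.cntO a : ℤ))

end Mu

section Theta

variable (tl hd : E → I) (m : I → ℕ) (N : ℕ) [DecidableEq I]

/-- The set `Θ^𝐦_{i_1,…,i_N}` of Laurent polynomials in `z_1, …, z_N`. -/
noncomputable def ThetaOrd (io : Fin N → I) : Set (LaurentPoly ℚ (Fin N)) :=
  {F | ∀ d : Fin N → ℤ,
    ires ℚ N (
      (∏ a : Fin N, (1 + tvar ℚ N a) ^ d a) *
      lpEval (constIL ℚ N) (fun a => 1 + tvar ℚ N a) F *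
      (∏ p ∈ Finset.filter (fun p : Fin N × Fin N => p.1 < p.2) Finset.univ,
        (tvar ℚ N p.2 - tvar ℚ N p.1) ^
          (((if io p.1 = io p.2 then 1 else 0) : ℤ)
            - (Nat.card {e : E // tl e = io p.1 ∧ hd e = io p.2} : ℤ))) *
      ∏ a : Fin N, tvar ℚ N a ^ (-(m (io a) : ℤ))) = 0}

end Theta

section Vn

variable {I : Type} (n : I → ℕ)

/-- The space `V_𝐧` of color-symmetric Laurent polynomials. -/
noncomputable def VSym : Submodule ℚ (LaurentPoly ℚ (Σ i : I, Fin (n i))) where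
  carrier := {F | ∀ σ : Equiv.Perm (Σ i : I, Fin (n i)),
    (∀ c, (σ c).1 = c.1) → lpRename (K := ℚ) σ F = F}
  add_mem' := by intro F G hF hG σ hσ; simp [map_add, hF σ hσ, hG σ hσ]
  zero_mem' := by intro σ hσ; simp
  smul_mem' := by intro c F hF σ hσ; simp [map_smul, hF σ hσ]

end Vn

section ThetaFull

variable (tl hd : E → I) (m n : I → ℕ) (N : ℕ) [DecidableEq I]

/-- The set `Θ_𝐧^𝐦 ⊆ V_𝐧`. -/
noncomputable def ThetaFull : Set (LaurentPoly ℚ (Σ i : I, Fin (n i))) :=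
  {F | F ∈ VSym n ∧ ∀ e : Fin N ≃ (Σ i : I, Fin (n i)),
    lpRename e.symm F ∈ ThetaOrd tl hd m N (fun a => (e a).1)}

end ThetaFull

/-!
`Θ` is the set of `F` killed by all the functionals `F ↦ res (ρ(G F) W)`, `G` a Laurent
polynomial and `W` the fixed kernel of the definition, so it is an ideal. Every factor of `W` is
a unit of known total degree in the iterated Laurent series field (`t_a` and `t_b - t_a` have
degree `1`, `1 + t_a` degree `0`), so `W` has total degree bounded below. Since
`ρ((z_a - 1)^M) = t_a^M`, for `M` large the integrand has total degree `> -n` and its residue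
vanishes: `(z_a - 1)^M ∈ Θ`. Hence the images of all monomials in the quotient are unipotent,
thus integral, and the quotient is a finitely generated integral algebra, i.e. finite-dimensional.
-/

namespace IterLaurent

variable {K : Type} [Field K] {n : ℕ}

/-- `IterLaurent K (n + 1)` is by definition the Laurent series field over `IterLaurent K n`,
in the outermost variable `t_1`. -/
noncomputable def toLaurent : IterLaurent K (n + 1) ≃+* LaurentSeries (IterLaurent K n) :=
  RingEquiv.refl _

lemma tvar_zero : tvar K (n + 1) 0 = toLaurent.symm (HahnSeries.single 1 1) := rfl

lemma tvar_succ (a : Fin n) :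
    tvar K (n + 1) a.succ = toLaurent.symm (HahnSeries.C (tvar K n a)) := rfl

lemma constIL_succ (q : K) :
    constIL K (n + 1) q = toLaurent.symm (HahnSeries.C (constIL K n q)) := rfl

lemma ires_succ (x : IterLaurent K (n + 1)) :
    ires K (n + 1) x = ires K n ((toLaurent x).coeff (-1)) := rfl

lemma ires_add (x y : IterLaurent K n) : ires K n (x + y) = ires K n x + ires K n y := by
  induction n with
  | zero => rfl
  | succ n ih => simp only [ires_succ, map_add, HahnSeries.coeff_add, ih]

lemma ires_constIL_mul (q : K) (x : IterLaurent K n) :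
    ires K n (constIL K n q * x) = q * ires K n x := by
  induction n with
  | zero => rfl
  | succ n ih =>
    rw [ires_succ, ires_succ, constIL_succ, map_mul, RingEquiv.apply_symm_apply,
      HahnSeries.C_apply, HahnSeries.coeff_single_zero_mul, ih]

/-- `DegGE K n r x`: every monomial `t_1^{k_1} ⋯ t_n^{k_n}` occurring in `x` has total degree
`k_1 + ⋯ + k_n ≥ r`. -/
def DegGE (K : Type) [Field K] : (n : ℕ) → ℤ → IterLaurent K n → Prop
  | 0, r, x => x ≠ 0 → r ≤ 0
  | n + 1, r, x => ∀ k : ℤ, DegGE K n (r - k) ((toLaurent x).coeff k)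

lemma degGE_zero (r : ℤ) : DegGE K n r 0 := by
  induction n generalizing r with
  | zero => exact fun h => (h rfl).elim
  | succ n ih => exact fun k => ih _

lemma DegGE.mono {r r' : ℤ} {x : IterLaurent K n} (hx : DegGE K n r x) (h : r' ≤ r) :
    DegGE K n r' x := by
  induction n generalizing r r' with
  | zero => exact fun hne => h.trans (hx hne)
  | succ n ih => exact fun k => ih (hx k) (by omega)

lemma DegGE.add {r : ℤ} {x y : IterLaurent K n} (hx : DegGE K n r x) (hy : DegGE K n r y) :
    DegGE K n r (x + y) := by
  induction n generalizing r with
  | zero =>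
    intro hne
    rcases eq_or_ne x 0 with rfl | h
    · exact hy (by simpa using hne)
    · exact hx h
  | succ n ih =>
    intro k
    rw [map_add, HahnSeries.coeff_add]
    exact ih (hx k) (hy k)

lemma DegGE.neg {r : ℤ} {x : IterLaurent K n} (hx : DegGE K n r x) : DegGE K n r (-x) := by
  induction n generalizing r with
  | zero => exact fun hne => hx (neg_ne_zero.mp hne)
  | succ n ih =>
    intro k
    rw [map_neg, HahnSeries.coeff_neg]
    exact ih (hx k)

lemma DegGE.sub {r : ℤ} {x y : IterLaurent K n} (hx : DegGE K n r x) (hy : DegGE K n r y) :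
    DegGE K n r (x - y) :=
  sub_eq_add_neg x y ▸ hx.add hy.neg

lemma DegGE.mul {r s : ℤ} {x y : IterLaurent K n} (hx : DegGE K n r x) (hy : DegGE K n s y) :
    DegGE K n (r + s) (x * y) := by
  induction n generalizing r s with
  | zero =>
    intro hne
    have := hx (left_ne_zero_of_mul hne)
    have := hy (right_ne_zero_of_mul hne)
    omega
  | succ n ih =>
    intro k
    rw [map_mul, HahnSeries.coeff_mul]
    refine Finset.sum_induction _ (DegGE K n (r + s - k)) (fun _ _ => DegGE.add)
      (degGE_zero _) fun ij hij => ?_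
    have hk : ij.1 + ij.2 = k := (Finset.mem_antidiagonal.mp hij).2.2
    exact (ih (hx ij.1) (hy ij.2)).mono (by omega)

lemma degGE_single {r k : ℤ} {x : IterLaurent K n} (hx : DegGE K n (r - k) x) :
    DegGE K (n + 1) r (toLaurent.symm (HahnSeries.single k x)) := by
  intro j
  rw [RingEquiv.apply_symm_apply]
  rcases eq_or_ne j k with rfl | hj
  · rwa [HahnSeries.coeff_single_same]
  · rw [HahnSeries.coeff_single_of_ne hj]
    exact degGE_zero _

lemma degGE_C {r : ℤ} {x : IterLaurent K n} (hx : DegGE K n r x) :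
    DegGE K (n + 1) r (toLaurent.symm (HahnSeries.C x)) :=
  (HahnSeries.C_apply (Γ := ℤ) x) ▸ degGE_single (by simpa using hx)

lemma degGE_one : DegGE K n 0 1 := by
  induction n with
  | zero => exact fun _ => le_rfl
  | succ n ih => simpa using degGE_C ih

lemma degGE_prod {α : Type*} (s : Finset α) {r : α → ℤ} {x : α → IterLaurent K n}
    (h : ∀ a ∈ s, DegGE K n (r a) (x a)) : DegGE K n (∑ a ∈ s, r a) (∏ a ∈ s, x a) := by
  classical
  induction s using Finset.induction_on with
  | empty => simpa using degGE_one
  | insert a s ha ih =>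
    rw [Finset.sum_insert ha, Finset.prod_insert ha]
    exact (h a (Finset.mem_insert_self a s)).mul (ih fun b hb => h b (Finset.mem_insert_of_mem hb))

lemma DegGE.pow {r : ℤ} {x : IterLaurent K n} (hx : DegGE K n r x) (k : ℕ) :
    DegGE K n (k * r) (x ^ k) := by
  simpa using degGE_prod (Finset.range k) fun _ _ => hx

lemma degGE_ofPowerSeries {r : ℤ} {p : PowerSeries (IterLaurent K n)}
    (hp : ∀ k : ℕ, DegGE K n (r - k) (PowerSeries.coeff k p)) :
    DegGE K (n + 1) r (toLaurent.symm (HahnSeries.ofPowerSeries ℤ _ p)) := by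
  intro k
  rw [RingEquiv.apply_symm_apply, PowerSeries.coeff_coe]
  split_ifs with hk
  · exact degGE_zero _
  · simpa [abs_of_nonneg (not_lt.mp hk)] using hp k.natAbs

lemma ires_eq_zero_of_degGE {r : ℤ} {x : IterLaurent K n} (hx : DegGE K n r x)
    (hr : -(n : ℤ) < r) : ires K n x = 0 := by
  induction n generalizing r with
  | zero => exact not_not.mp fun h => by have := hx h; omega
  | succ n ih => exact ih (hx (-1)) (by omega)

lemma ires_zero : ires K n 0 = 0 :=
  ires_eq_zero_of_degGE (degGE_zero 1) (by omega)

structure DegExact (K : Type) [Field K] (n : ℕ) (r : ℤ) (x : IterLaurent K n) : Prop where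
  ne_zero : x ≠ 0
  degGE : DegGE K n r x
  degGE_inv : DegGE K n (-r) x⁻¹

lemma DegExact.zpow {r : ℤ} {x : IterLaurent K n} (hx : DegExact K n r x) (k : ℤ) :
    DegGE K n (k * r) (x ^ k) := by
  obtain ⟨k, rfl | rfl⟩ := Int.eq_nat_or_neg k
  · simpa using hx.degGE.pow k
  · rw [zpow_neg, ← inv_zpow, zpow_natCast]
    simpa using hx.degGE_inv.pow k

lemma DegExact.neg {r : ℤ} {x : IterLaurent K n} (hx : DegExact K n r x) :
    DegExact K n r (-x) :=
  ⟨neg_ne_zero.mpr hx.ne_zero, hx.degGE.neg, inv_neg (a := x) ▸ hx.degGE_inv.neg⟩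

lemma DegExact.C {r : ℤ} {x : IterLaurent K n} (hx : DegExact K n r x) :
    DegExact K (n + 1) r (toLaurent.symm (HahnSeries.C x)) := by
  refine ⟨by simpa using hx.ne_zero, degGE_C hx.degGE, ?_⟩
  rw [← map_inv₀, ← map_inv₀]
  exact degGE_C hx.degGE_inv

/-- `(C u - X)⁻¹ = ∑ₖ u^{-(k+1)} Xᵏ`, and the term of index `k` has degree `-(k+1) r + k ≥ -r`
because `r ≤ 1`. -/
lemma degExact_C_sub_X {r : ℤ} {u : IterLaurent K n} (hu : DegExact K n r u) (hr : r ≤ 1) :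
    DegExact K (n + 1) r (toLaurent.symm (HahnSeries.C u - HahnSeries.single 1 1)) := by
  have hmul : (HahnSeries.C u - HahnSeries.single 1 1) * HahnSeries.ofPowerSeries ℤ _
      (PowerSeries.invUnitsSub (Units.mk0 u hu.ne_zero)) = 1 := by
    have h := PowerSeries.invUnitsSub_mul_sub (Units.mk0 u hu.ne_zero)
    rw [Units.val_mk0] at h
    rw [← HahnSeries.ofPowerSeries_C, ← HahnSeries.ofPowerSeries_X, ← map_sub, ← map_mul,
      mul_comm, h, map_one]
  refine ⟨(map_ne_zero toLaurent.symm).mpr (left_ne_zero_of_mul_eq_one hmul), ?_, ?_⟩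
  · rw [map_sub]
    exact (degGE_C hu.degGE).sub (degGE_single (degGE_one.mono (by omega)))
  · rw [← map_inv₀, inv_eq_of_mul_eq_one_right hmul]
    refine degGE_ofPowerSeries fun k => ?_
    rw [PowerSeries.coeff_invUnitsSub, one_divp, Units.val_inv_eq_inv_val,
      Units.val_pow_eq_pow_val, Units.val_mk0, ← inv_pow]
    exact (hu.degGE_inv.pow (k + 1)).mono (by push_cast; nlinarith)

lemma degExact_tvar (a : Fin n) : DegExact K n 1 (tvar K n a) := by
  induction n with
  | zero => exact a.elim0
  | succ n ih =>
    cases a using Fin.cases with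
    | zero =>
      have hmul : (HahnSeries.single 1 1 : LaurentSeries (IterLaurent K n)) *
          HahnSeries.single (-1) 1 = 1 := by
        rw [HahnSeries.single_mul_single]; simp
      rw [tvar_zero]
      refine ⟨by simp, degGE_single (by simpa using degGE_one), ?_⟩
      rw [← map_inv₀, inv_eq_of_mul_eq_one_right hmul]
      exact degGE_single (by simpa using degGE_one)
    | succ a =>
      rw [tvar_succ]
      exact (ih a).C

lemma degExact_one_add_tvar (a : Fin n) : DegExact K n 0 (1 + tvar K n a) := by
  induction n with
  | zero => exact a.elim0
  | succ n ih =>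
    cases a using Fin.cases with
    | zero =>
      have hneg_one : DegExact K n 0 (-1) := ⟨by simp, degGE_one.neg, by simpa using degGE_one.neg⟩
      have h := (degExact_C_sub_X hneg_one zero_le_one).neg
      rw [tvar_zero]
      convert h using 1
      simp [map_sub, add_comm]
    | succ a =>
      rw [tvar_succ, ← map_one (toLaurent.symm.toRingHom.comp HahnSeries.C)]
      simpa [map_add] using (ih a).C

lemma degExact_tvar_sub_tvar {p q : Fin n} (hpq : p < q) :
    DegExact K n 1 (tvar K n q - tvar K n p) := by
  induction n with
  | zero => exact p.elim0
  | succ n ih =>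
    cases p using Fin.cases with
    | zero =>
      cases q using Fin.cases with
      | zero => exact absurd hpq (lt_irrefl 0)
      | succ j =>
        rw [tvar_succ, tvar_zero, ← map_sub]
        exact degExact_C_sub_X (degExact_tvar j) le_rfl
    | succ i =>
      cases q using Fin.cases with
      | zero => exact absurd hpq (Fin.not_lt_zero _)
      | succ j =>
        rw [tvar_succ, tvar_succ, ← map_sub, ← map_sub]
        exact (ih (Fin.succ_lt_succ_iff.mp hpq)).C

end IterLaurent

section LaurentPolyEval

variable {K L ι : Type} [CommRing K] [Field L]

noncomputable def monomialEval (v : ι → L) (hv : ∀ a, v a ≠ 0) :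
    Multiplicative (ι →₀ ℤ) →* L where
  toFun d := d.toAdd.prod fun a k => v a ^ k
  map_one' := Finsupp.prod_zero_index
  map_mul' _ _ := Finsupp.prod_add_index' (fun a => zpow_zero (v a))
    fun a => zpow_add₀ (hv a)

noncomputable def lpEvalHom (φ : K →+* L) (v : ι → L) (hv : ∀ a, v a ≠ 0) :
    LaurentPoly K ι →+* L :=
  AddMonoidAlgebra.liftNCRingHom φ (monomialEval v hv) fun _ _ => Commute.all _ _

lemma lpEvalHom_apply (φ : K →+* L) (v : ι → L) (hv : ∀ a, v a ≠ 0) (F : LaurentPoly K ι) :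
    lpEvalHom φ v hv F = lpEval φ v F :=
  rfl

end LaurentPolyEval

section Unipotent

variable {G A : Type*} [Group G] [CommRing A]

lemma isIntegral_of_isNilpotent_sub_one {R : Type*} [CommRing R] [Algebra R A] {x : A}
    (hx : IsNilpotent (x - 1)) : IsIntegral R x := by
  obtain ⟨k, hk⟩ := hx
  exact ⟨(Polynomial.X - Polynomial.C 1) ^ k, (Polynomial.monic_X_sub_C 1).pow k, by simp [hk]⟩

def unipotentSubgroup (f : G →* A) : Subgroup G where
  carrier := {g | IsNilpotent (f g - 1)}
  mul_mem' {g h} hg hh := by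
    have : f (g * h) - 1 = (f g - 1) * f h + (f h - 1) := by rw [map_mul]; ring
    change IsNilpotent _
    rw [this]
    exact (Commute.all _ _).isNilpotent_add ((Commute.all _ _).isNilpotent_mul_right hg) hh
  one_mem' := by simp
  inv_mem' {g} hg := by
    have : f g⁻¹ - 1 = -(f g⁻¹ * (f g - 1)) := by
      rw [mul_sub, ← map_mul, inv_mul_cancel, map_one]; ring
    change IsNilpotent _
    rw [this]
    exact ((Commute.all _ _).isNilpotent_mul_left hg).neg

end Unipotent

theorem finiteDimensional_quotient_of_pow_sub_one_mem {K σ : Type} [Field K] [Fintype σ]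
    (J : Ideal (LaurentPoly K σ)) (M : ℕ) (hJ : ∀ a, (lpVar a - 1) ^ M ∈ J) :
    FiniteDimensional K (LaurentPoly K σ ⧸ J) := by
  let π := Ideal.Quotient.mkₐ K J
  let monomial : Multiplicative (σ →₀ ℤ) →* LaurentPoly K σ ⧸ J :=
    π.toMonoidHom.comp (AddMonoidAlgebra.of K (σ →₀ ℤ))
  have hmonomial (d : σ →₀ ℤ) : .ofAdd d ∈ unipotentSubgroup monomial := by
    induction d using Finsupp.induction_linear with
    | zero => exact one_mem _
    | add d e hd he => exact mul_mem hd he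
    | single a k =>
      rw [← Finsupp.smul_single_one, ofAdd_zsmul]
      refine zpow_mem (show IsNilpotent _ from ⟨M, ?_⟩) k
      have : monomial (.ofAdd (Finsupp.single a 1)) - 1 = π (lpVar a - 1) := by
        simp [monomial, π, lpVar]
      rw [this, ← map_pow, Ideal.Quotient.mkₐ_eq_mk, Ideal.Quotient.eq_zero_iff_mem]
      exact hJ a
  have : Algebra.IsIntegral K (LaurentPoly K σ ⧸ J) := ⟨fun x => by
    obtain ⟨F, rfl⟩ := Ideal.Quotient.mkₐ_surjective K J x
    induction F using AddMonoidAlgebra.induction_linear with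
    | zero => exact (map_zero π) ▸ isIntegral_zero
    | add F₁ F₂ h₁ h₂ => exact (map_add π F₁ F₂) ▸ h₁.add h₂
    | single d q =>
      rw [← mul_one q, ← smul_eq_mul, ← AddMonoidAlgebra.smul_single, map_smul]
      exact (isIntegral_of_isNilpotent_sub_one (hmonomial d)).smul q⟩
  have : Algebra.FiniteType K (LaurentPoly K σ) :=
    AddMonoidAlgebra.finiteType_iff_group_fg.mpr (Module.Finite.iff_addGroup_fg.mp inferInstance)
  exact Algebra.IsIntegral.finite

section ResIdeal

open IterLaurent

variable (K : Type) [Field K] (N : ℕ)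

/-- The map `ρ : z_a ↦ 1 + t_a`. -/
noncomputable def rho : LaurentPoly K (Fin N) →+* IterLaurent K N :=
  lpEvalHom (constIL K N) (fun a => 1 + tvar K N a) fun a => (degExact_one_add_tvar a).ne_zero

variable {K N}

lemma rho_apply (F : LaurentPoly K (Fin N)) :
    rho K N F = lpEval (constIL K N) (fun a => 1 + tvar K N a) F :=
  lpEvalHom_apply _ _ _ F

lemma rho_single (d : Fin N →₀ ℤ) (q : K) :
    rho K N (AddMonoidAlgebra.single d q) = constIL K N q * ∏ a, (1 + tvar K N a) ^ d a := by
  rw [rho_apply, lpEval, AddMonoidAlgebra.coeff_single,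
    Finsupp.sum_single_index (by rw [map_zero, zero_mul]),
    Finsupp.prod_fintype _ _ fun _ => zpow_zero _]

lemma rho_lpVar (a : Fin N) : rho K N (lpVar a) = 1 + tvar K N a := by
  rw [lpVar, rho_single, map_one, one_mul, Finset.prod_eq_single a (fun b _ hb => by
    rw [Finsupp.single_eq_of_ne hb, zpow_zero]) (by simp)]
  simp

variable (K N)

noncomputable def resIdeal (W : IterLaurent K N) : Ideal (LaurentPoly K (Fin N)) where
  carrier := {F | ∀ G, ires K N (rho K N (G * F) * W) = 0}
  add_mem' {F₁ F₂} h₁ h₂ G := by rw [mul_add, map_add, add_mul, ires_add, h₁ G, h₂ G, add_zero]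
  zero_mem' G := by rw [mul_zero, map_zero, zero_mul, ires_zero]
  smul_mem' c F hF G := by rw [smul_eq_mul, ← mul_assoc]; exact hF (G * c)

variable {K N}

lemma mem_resIdeal_iff {W : IterLaurent K N} {F : LaurentPoly K (Fin N)} :
    F ∈ resIdeal K N W ↔
      ∀ d : Fin N → ℤ, ires K N ((∏ a, (1 + tvar K N a) ^ d a) * rho K N F * W) = 0 := by
  constructor
  · intro hF d
    simpa [rho_single] using hF (AddMonoidAlgebra.single (Finsupp.equivFunOnFinite.symm d) 1)
  · intro hF G
    induction G using AddMonoidAlgebra.induction_linear with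
    | zero => rw [zero_mul, map_zero, zero_mul, ires_zero]
    | add G₁ G₂ h₁ h₂ => rw [add_mul, map_add, add_mul, ires_add, h₁, h₂, add_zero]
    | single d q =>
      rw [map_mul, rho_single, mul_assoc, mul_assoc, ires_constIL_mul, ← mul_assoc, hF d, mul_zero]

lemma pow_sub_one_mem_resIdeal {r : ℤ} {W : IterLaurent K N} (hW : DegGE K N r W) (a : Fin N)
    {M : ℕ} (hM : -(N : ℤ) < M + r) : (lpVar a - 1) ^ M ∈ resIdeal K N W := by
  rw [mem_resIdeal_iff]
  intro d
  have hmonomial : DegGE K N 0 (∏ b, (1 + tvar K N b) ^ d b) := by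
    simpa using degGE_prod Finset.univ fun b _ => (degExact_one_add_tvar b).zpow (d b)
  rw [map_pow, map_sub, rho_lpVar, map_one, add_sub_cancel_left]
  exact ires_eq_zero_of_degGE ((hmonomial.mul ((degExact_tvar a).degGE.pow M)).mul hW)
    (by simpa using hM)

theorem finiteDimensional_quotient_resIdeal {r : ℤ} {W : IterLaurent K N} (hW : DegGE K N r W) :
    FiniteDimensional K (LaurentPoly K (Fin N) ⧸ resIdeal K N W) :=
  finiteDimensional_quotient_of_pow_sub_one_mem _ (r.natAbs + 1) fun a =>
    pow_sub_one_mem_resIdeal hW a (by omega)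

end ResIdeal

section Theta

open IterLaurent

variable [DecidableEq I] (tl hd : E → I) (m : I → ℕ) (N : ℕ) (io : Fin N → I)

/-- The factor multiplying `ρ(z^d F)` in the definition of `Θ^𝐦_{i_1,…,i_N}`. -/
noncomputable def thetaWeight : IterLaurent ℚ N :=
  (∏ p ∈ Finset.filter (fun p : Fin N × Fin N => p.1 < p.2) Finset.univ,
    (tvar ℚ N p.2 - tvar ℚ N p.1) ^
      (((if io p.1 = io p.2 then 1 else 0) : ℤ)
        - (Nat.card {e : E // tl e = io p.1 ∧ hd e = io p.2} : ℤ))) *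
    ∏ a : Fin N, tvar ℚ N a ^ (-(m (io a) : ℤ))

lemma thetaOrd_eq_resIdeal :
    ThetaOrd tl hd m N io = resIdeal ℚ N (thetaWeight tl hd m N io) := by
  ext F
  rw [SetLike.mem_coe, mem_resIdeal_iff]
  simp only [ThetaOrd, thetaWeight, rho_apply, mul_assoc]
  rfl

lemma exists_degGE_thetaWeight : ∃ r, DegGE ℚ N r (thetaWeight tl hd m N io) :=
  ⟨_, (degGE_prod _ fun _ hp => (degExact_tvar_sub_tvar (Finset.mem_filter.mp hp).2).zpow _).mul
    (degGE_prod _ fun a _ => (degExact_tvar a).zpow _)⟩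

end Theta

theorem statement5_general {I E : Type} [Fintype I] [DecidableEq I]
    (tl hd : E → I) (m n : I → ℕ) (io : Fin (∑ i, n i) → I) :
    ∃ J : Ideal (LaurentPoly ℚ (Fin (∑ i, n i))),
      (J : Set (LaurentPoly ℚ (Fin (∑ i, n i)))) = ThetaOrd tl hd m (∑ i, n i) io ∧
      FiniteDimensional ℚ (LaurentPoly ℚ (Fin (∑ i, n i)) ⧸ J) := by
  obtain ⟨r, hW⟩ := exists_degGE_thetaWeight tl hd m (∑ i, n i) io
  exact ⟨_, (thetaOrd_eq_resIdeal tl hd m _ io).symm, finiteDimensional_quotient_resIdeal hW⟩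

/-- For every ordering `i_1,…,i_n` of `𝐧`, the set `Θ^𝐦_{i_1,…,i_n}` is an
ideal of the Laurent polynomial ring `ℚ[z_1^{±1},…,z_n^{±1}]`, with finite-dimensional
quotient over `ℚ`. -/
theorem statement5 {I E : Type} [Fintype I] [DecidableEq I] [Fintype E]
    (tl hd : E → I) (m n : I → ℕ) (io : Fin (∑ i, n i) → I)
    (hio : ∀ i : I, Nat.card {a : Fin (∑ i, n i) // io a = i} = n i) :
    ∃ J : Ideal (LaurentPoly ℚ (Fin (∑ i, n i))),
      (J : Set (LaurentPoly ℚ (Fin (∑ i, n i)))) = ThetaOrd tl hd m (∑ i, n i) io ∧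
      FiniteDimensional ℚ (LaurentPoly ℚ (Fin (∑ i, n i)) ⧸ J) :=
  statement5_general tl hd m n io
end

section
/- Let x = (x_1,…,x_n) ∈ ℂ^n and let P := {σ ∈ S_n : x_{σ(a)} = x_a for all a} be the stabilizer of x in the symmetric group. For every polynomial f ∈ ℂ[z_1,…,z_n] invariant under P and every N ∈ ℕ, there exists a polynomial g ∈ ℂ[z_1,…,z_n] invariant under the full symmetric group S_n such that f − g ∈ J_x^N. (This is the polynomial form of the approximation claim proved inside Proposition 3.2: a P-invariant polynomial can be matched to arbitrarily high order at x by a fully symmetric one.) -/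
/-!
The ideals `J_y` of distinct points are comaximal, so by the Chinese remainder theorem there is
`h` with `h ≡ 1 mod J_x^N` and `h ≡ 0 mod J_y^N` at every other point `y = x ∘ σ` of the
`S_n`-orbit of `x`. Then `g = |P|⁻¹ ∑_σ σ(f h)` is symmetric, and since `σ` carries `J_{x ∘ σ}`
into `J_x`, the term `σ(f h)` is `≡ f mod J_x^N` for `σ ∈ P` and `≡ 0` otherwise.
-/

open MvPolynomial Finset

namespace MvPolynomial

variable {ι κ K R : Type*}

noncomputable def pointIdeal [CommRing R] (y : ι → R) : Ideal (MvPolynomial ι R) :=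
  Ideal.span (Set.range fun a => X a - C (y a))

theorem map_rename_pointIdeal_le [CommRing R] (e : ι → κ) (y : κ → R) :
    (pointIdeal (y ∘ e)).map (rename e) ≤ pointIdeal y := by
  rw [pointIdeal, Ideal.map_span, Ideal.span_le]
  rintro _ ⟨_, ⟨a, rfl⟩, rfl⟩
  simp only [SetLike.mem_coe, Function.comp_apply, map_sub, rename_X, rename_C]
  exact Ideal.subset_span ⟨e a, rfl⟩

theorem rename_mem_pointIdeal_pow [CommRing R] {e : ι → κ} {y : κ → R} {N : ℕ}
    {p : MvPolynomial ι R} (hp : p ∈ pointIdeal (y ∘ e) ^ N) :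
    rename e p ∈ pointIdeal y ^ N := by
  have := Ideal.mem_map_of_mem (rename e) hp
  rw [Ideal.map_pow] at this
  exact Ideal.pow_right_mono (map_rename_pointIdeal_le e y) N this

theorem isCoprime_pointIdeal [Field K] {y z : ι → K} (hyz : y ≠ z) :
    IsCoprime (pointIdeal y) (pointIdeal z) := by
  obtain ⟨a, ha⟩ := Function.ne_iff.mp hyz
  rw [Ideal.isCoprime_iff_sup_eq]
  have hunit : IsUnit (C (y a - z a) : MvPolynomial ι K) := (sub_ne_zero.mpr ha).isUnit.map C
  have hmem : C (y a - z a) ∈ pointIdeal y ⊔ pointIdeal z := by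
    have : C (y a - z a) = (X a - C (z a)) - (X a - C (y a)) := by simp only [map_sub]; ring
    rw [this]
    exact sub_mem (Ideal.mem_sup_right (Ideal.subset_span ⟨a, rfl⟩))
      (Ideal.mem_sup_left (Ideal.subset_span ⟨a, rfl⟩))
  exact Ideal.eq_top_of_isUnit_mem _ hmem hunit

theorem exists_one_sub_mem_pointIdeal_pow_and_mem_pointIdeal_pow [Field K] {α : Type*}
    (y : ι → K) (z : α → ι → K) (s : Finset α) (hz : ∀ i ∈ s, y ≠ z i) (N : ℕ) :
    ∃ h : MvPolynomial ι K, 1 - h ∈ pointIdeal y ^ N ∧ ∀ i ∈ s, h ∈ pointIdeal (z i) ^ N := by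
  have hcop : IsCoprime (pointIdeal y ^ N) (∏ i ∈ s, pointIdeal (z i) ^ N) :=
    IsCoprime.prod_right fun i hi => (isCoprime_pointIdeal (hz i hi)).pow
  obtain ⟨e, he, h, hh, hsum⟩ := Ideal.isCoprime_iff_exists.mp hcop
  refine ⟨h, by rwa [← hsum, add_sub_cancel_right], fun i hi => ?_⟩
  exact Ideal.le_of_dvd (dvd_prod_of_mem _ hi) hh

end MvPolynomial

/-- Let `x ∈ ℂ^n` and let `P` be its stabilizer in `S_n`. Every `P`-invariant
polynomial `f ∈ ℂ[z_1,…,z_n]` can be matched to arbitrarily high order at `x` by a fully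
symmetric polynomial: for every `N` there exists an `S_n`-invariant `g` with `f − g ∈ J_x^N`,
where `J_x` is the ideal generated by `z_1 − x_1, …, z_n − x_n`. -/
theorem statement6 (n : ℕ) (x : Fin n → ℂ) (f : MvPolynomial (Fin n) ℂ)
    (hf : ∀ σ : Equiv.Perm (Fin n), (∀ a, x (σ a) = x a) → MvPolynomial.rename σ f = f)
    (N : ℕ) :
    ∃ g : MvPolynomial (Fin n) ℂ,
      (∀ σ : Equiv.Perm (Fin n), MvPolynomial.rename σ g = g) ∧
      f - g ∈ (Ideal.span (Set.range fun a : Fin n =>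
        MvPolynomial.X a - MvPolynomial.C (x a))) ^ N := by
  classical
  set P : Finset (Equiv.Perm (Fin n)) := {σ | x ∘ σ = x}
  obtain ⟨h, hx, hPc⟩ := exists_one_sub_mem_pointIdeal_pow_and_mem_pointIdeal_pow x
    (fun σ : Equiv.Perm (Fin n) => x ∘ σ) Pᶜ (by simp [P, eq_comm]) N
  set c : MvPolynomial (Fin n) ℂ := C (#P : ℂ)⁻¹
  have hcard : (#P : ℂ) ≠ 0 := Nat.cast_ne_zero.mpr (card_ne_zero_of_mem (a := 1) (by simp [P]))
  have hf_avg : f = ∑ σ ∈ P, rename σ (c * f) := by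
    have hfix : ∀ σ ∈ P, rename σ (c * f) = c * f := fun σ hσ => by
      rw [map_mul, rename_C, hf σ (congrFun (mem_filter.mp hσ).2)]
    rw [sum_congr rfl hfix, sum_const, nsmul_eq_mul, ← mul_assoc, ← map_natCast C, ← C_mul,
      mul_inv_cancel₀ hcard, C_1, one_mul]
  refine ⟨∑ σ : Equiv.Perm (Fin n), rename σ (c * f * h), fun τ => ?_, ?_⟩
  · rw [map_sum]
    exact Fintype.sum_equiv (Equiv.mulLeft τ) _ _ fun σ => by simp [rename_rename]
  · have hsplit : f - ∑ σ : Equiv.Perm (Fin n), rename σ (c * f * h) =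
        ∑ σ ∈ P, rename σ (c * f * (1 - h)) - ∑ σ ∈ Pᶜ, rename σ (c * f * h) := by
      nth_rewrite 1 [hf_avg]
      rw [← sum_add_sum_compl P]
      simp only [mul_sub, mul_one, map_sub, sum_sub_distrib]
      ring
    rw [hsplit]
    refine sub_mem (sum_mem fun σ hσ => rename_mem_pointIdeal_pow ?_)
      (sum_mem fun σ hσ => rename_mem_pointIdeal_pow ?_)
    · rw [(mem_filter.mp hσ).2]
      exact Ideal.mul_mem_left _ _ hx
    · exact Ideal.mul_mem_left _ _ (hPc σ hσ)
end

section
/- For every i ∈ I and every representation T of Q, the map Hom(I_i^*, T) → T_i sending a morphism η to η_i(∅_i) is an isomorphism of ℂ-vector spaces. -/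
/-- Representations of the quiver with vertex set `I`, arrow set `E`, and incidence maps
`tl, hd : E → I`, over `ℂ`. -/
structure QRep (I E : Type) (tl hd : E → I) where
  T : I → Type
  [addgrp : ∀ i, AddCommGroup (T i)]
  [mod : ∀ i, Module ℂ (T i)]
  φ : (e : E) → T (tl e) →ₗ[ℂ] T (hd e)

attribute [instance] QRep.addgrp QRep.mod

/-- Paths in the quiver from `i` to `j` (including the empty path when `i = j`). -/
inductive QPath {I E : Type} (tl hd : E → I) : I → I → Type
  | nil (i : I) : QPath tl hd i i
  | cons {i j : I} (p : QPath tl hd i j) (e : E) (h : tl e = j) : QPath tl hd i (hd e)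

variable {I E : Type} (tl hd : E → I)

/-- The representation `I_i^*`: at vertex `j`, the free `ℂ`-vector space on the set of paths
from `i` to `j`; an arrow `e` acts by concatenation `p ↦ ep`. -/
noncomputable def dualInj (i : I) : QRep I E tl hd where
  T := fun j => QPath tl hd i j →₀ ℂ
  φ := fun e => Finsupp.lmapDomain ℂ ℂ (fun p => QPath.cons p e rfl)

/-- The space of morphisms of representations `A → B`, as a submodule of
`Π j, Hom_ℂ(A_j, B_j)`. -/
noncomputable def HomSub (A B : QRep I E tl hd) :
    Submodule ℂ ((j : I) → (A.T j →ₗ[ℂ] B.T j)) where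
  carrier := {η | ∀ e : E, (η (hd e)).comp (A.φ e) = (B.φ e).comp (η (tl e))}
  add_mem' := by
    intro f g hf hg e
    simp [LinearMap.add_comp, LinearMap.comp_add, hf e, hg e]
  zero_mem' := by intro e; simp
  smul_mem' := by
    intro c f hf e
    simp [LinearMap.smul_comp, LinearMap.comp_smul, hf e]

/-- Evaluation of a morphism `I_i^* → B` at the empty path `∅_i`. -/
noncomputable def evalAtNil (i : I) (B : QRep I E tl hd) :
    HomSub tl hd (dualInj tl hd i) B →ₗ[ℂ] B.T i where
  toFun := fun η => (η.1 i) (Finsupp.single (QPath.nil i) 1)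
  map_add' := fun _ _ => rfl
  map_smul' := fun _ _ => rfl

/-
A morphism `η : I_i^* → T` is determined by `t = η_i(∅_i)`: compatibility with the arrows forces
`η_j(p) = φ_p(t)` for every path `p` from `i` to `j`, where `φ_p` is the composite of the maps
along `p`. Conversely, for any `t ∈ T_i` the linear extension of `p ↦ φ_p(t)` is a morphism,
because `I_i^*` is free on the paths and the arrows act on it by concatenation.
-/

namespace QRep

variable {tl hd} (B : QRep I E tl hd) {i : I}

def pathAction (t : B.T i) : ∀ {j : I}, QPath tl hd i j → B.T j
  | _, .nil _ => t
  | _, .cons p e h => B.φ e (h ▸ pathAction t p)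

@[simp]
theorem pathAction_nil (t : B.T i) : B.pathAction t (.nil i) = t := rfl

@[simp]
theorem pathAction_cons (t : B.T i) {j : I} (p : QPath tl hd i j) (e : E) (h : tl e = j) :
    B.pathAction t (.cons p e h) = B.φ e (h ▸ B.pathAction t p) := rfl

theorem dualInj_φ_single (e : E) (p : QPath tl hd i (tl e)) (c : ℂ) :
    (dualInj tl hd i).φ e (Finsupp.single p c) = Finsupp.single (.cons p e rfl) c :=
  Finsupp.mapDomain_single

noncomputable def homOfVector (t : B.T i) : HomSub tl hd (dualInj tl hd i) B :=
  ⟨fun _ => Finsupp.linearCombination ℂ (B.pathAction t), fun e =>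
    Finsupp.lhom_ext fun p c => by
      change Finsupp.linearCombination ℂ (B.pathAction t) ((dualInj tl hd i).φ e (.single p c)) =
        B.φ e (Finsupp.linearCombination ℂ (B.pathAction t) (.single p c))
      simp [dualInj_φ_single]⟩

theorem evalAtNil_homOfVector (t : B.T i) : evalAtNil tl hd i B (B.homOfVector t) = t := by
  change Finsupp.linearCombination ℂ (B.pathAction t) (.single (.nil i) 1) = t
  simp

theorem homSub_apply_single_path (η : HomSub tl hd (dualInj tl hd i) B) {j : I}
    (p : QPath tl hd i j) :
    η.1 j (Finsupp.single p 1) = B.pathAction (evalAtNil tl hd i B η) p := by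
  induction p with
  | nil => rfl
  | cons p e h ih =>
    subst h
    have hcomm : η.1 (hd e) ((dualInj tl hd i).φ e (.single p 1)) =
        B.φ e (η.1 (tl e) (.single p 1)) :=
      LinearMap.congr_fun (η.2 e) _
    rw [dualInj_φ_single] at hcomm
    rw [hcomm, ih, pathAction_cons]

theorem homOfVector_evalAtNil (η : HomSub tl hd (dualInj tl hd i) B) :
    B.homOfVector (evalAtNil tl hd i B η) = η := by
  refine Subtype.ext (funext fun j => Finsupp.lhom_ext' fun p => LinearMap.ext_ring ?_)
  change Finsupp.linearCombination ℂ (B.pathAction _) (.single p 1) = η.1 j (.single p 1)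
  simp [homSub_apply_single_path]

end QRep

theorem statement11_general {I E : Type} (tl hd : E → I) (i : I) (B : QRep I E tl hd) :
    Function.Bijective (evalAtNil tl hd i B) :=
  Function.bijective_iff_has_inverse.mpr
    ⟨B.homOfVector, B.homOfVector_evalAtNil, B.evalAtNil_homOfVector⟩

/-- For every `i ∈ I` and every representation `T` of `Q`, the map
`Hom(I_i^*, T) → T_i`, `η ↦ η_i(∅_i)`, is an isomorphism of `ℂ`-vector spaces
(it is `ℂ`-linear by construction, and bijective). -/
theorem statement11 {I E : Type} [Fintype I] (tl hd : E → I) (i : I) (B : QRep I E tl hd) :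
    Function.Bijective (evalAtNil tl hd i B) :=
  statement11_general tl hd i B
end
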